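/- Let m = 4, κ_2(x_1,x_2,x_3,x_4) = x_1 ∧ ((¬x_2 ∧ x_3 ∧ x_4) ∨ (x_2 ∧ x_3) ∨ (x_2 ∧ ¬x_3 ∧ ¬x_4)), and v = (1,0,0,0), so c = κ_2(v) = 0. Then feature 1 is irrelevant (belongs to no AXp) while feature 4 is relevant (belongs to some AXp), yet Sv(1) = 1/8 ≠ 0 and Sv(4) = 0 (a second witness to issue I4). -/

import Mathlib

/-- The set of points agreeing with `v` on all features in `S`. -/
def upsilon {m : ℕ} (v : Fin m → Bool) (S : Finset (Fin m)) : Set (Fin m → Bool) :=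
  {x | ∀ i ∈ S, x i = v i}

/-- Weak abductive explanation: fixing the features in `S` to their values in `v`
forces the prediction to remain `κ v`. -/
def WAXp {m : ℕ} (κ : (Fin m → Bool) → Bool) (v : Fin m → Bool) (S : Finset (Fin m)) : Prop :=
  ∀ x ∈ upsilon v S, κ x = κ v

/-- Abductive explanation: a subset-minimal weak AXp. -/
def AXp {m : ℕ} (κ : (Fin m → Bool) → Bool) (v : Fin m → Bool) (S : Finset (Fin m)) : Prop :=
  WAXp κ v S ∧ ∀ T ⊂ S, ¬ WAXp κ v T

/-- Weak contrastive explanation: freeing the features in `S` (fixing all others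
to their values in `v`) allows the prediction to change. -/
def WCXp {m : ℕ} (κ : (Fin m → Bool) → Bool) (v : Fin m → Bool) (S : Finset (Fin m)) : Prop :=
  ∃ x : Fin m → Bool, (∀ i ∉ S, x i = v i) ∧ κ x ≠ κ v

/-- Contrastive explanation: a subset-minimal weak CXp. -/
def CXp {m : ℕ} (κ : (Fin m → Bool) → Bool) (v : Fin m → Bool) (S : Finset (Fin m)) : Prop :=
  WCXp κ v S ∧ ∀ T ⊂ S, ¬ WCXp κ v T

/-- A feature is relevant if it belongs to some AXp. -/
def Relevant {m : ℕ} (κ : (Fin m → Bool) → Bool) (v : Fin m → Bool) (i : Fin m) : Prop :=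
  ∃ S, AXp κ v S ∧ i ∈ S

/-- The sufficiency function `σ`: `σ s = true` iff fixing exactly the features
selected by `s` to their values in `v` forces the prediction `κ v` everywhere. -/
def sigmaFn {m : ℕ} (κ : (Fin m → Bool) → Bool) (v : Fin m → Bool) (s : Fin m → Bool) : Bool :=
  decide (∀ x : Fin m → Bool, (∀ i : Fin m, s i = true → x i = v i) → κ x = κ v)

/-- Average value of the classifier over the points agreeing with `v` on `S`. -/
def phi {m : ℕ} (κ : (Fin m → Bool) → Bool) (v : Fin m → Bool) (S : Finset (Fin m)) : ℚ :=
  (1 / 2 ^ (m - S.card)) *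
    ∑ x ∈ Finset.univ.filter (fun x : Fin m → Bool => ∀ i ∈ S, x i = v i),
      (if κ x = true then (1 : ℚ) else 0)

/-- The Shapley value of feature `i` for the instance `(v, κ v)`. -/
def Sv {m : ℕ} (κ : (Fin m → Bool) → Bool) (v : Fin m → Bool) (i : Fin m) : ℚ :=
  ∑ S ∈ (Finset.univ.erase i).powerset,
    ((S.card.factorial : ℚ) * ((m - S.card - 1).factorial : ℚ) / (m.factorial : ℚ)) *
      (phi κ v (insert i S) - phi κ v S)

/-- The classifier κ₂(x₁,x₂,x₃,x₄) = x₁ ∧ ((¬x₂ ∧ x₃ ∧ x₄) ∨ (x₂ ∧ x₃) ∨ (x₂ ∧ ¬x₃ ∧ ¬x₄))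
(features are 0-indexed). -/
def kappa2 : (Fin 4 → Bool) → Bool := fun x =>
  x 0 && ((!(x 1) && x 2 && x 3) || (x 1 && x 2) || (x 1 && !(x 2) && !(x 3)))

/-- The point v = (1,0,0,0). -/
def v1000 : Fin 4 → Bool := ![true, false, false, false]

/-!
Since `κ₂ = x₁ ∧ g`, every point with `x₁ = 0` already has the prediction `0` of `v`; hence
dropping feature 1 from a weak AXp leaves a weak AXp, so feature 1 lies in no subset-minimal one.
Fixing `x₂ = x₄ = 0` kills every disjunct of `g`, and neither feature alone does, so `{2, 4}` is
an AXp containing feature 4. The Shapley values are finite sums and are computed outright.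
-/

section Explanations

variable {m : ℕ} {κ : (Fin m → Bool) → Bool} {v : Fin m → Bool}

instance (κ : (Fin m → Bool) → Bool) (v : Fin m → Bool) (S : Finset (Fin m)) :
    Decidable (WAXp κ v S) :=
  inferInstanceAs (Decidable (∀ x : Fin m → Bool, (∀ i ∈ S, x i = v i) → κ x = κ v))

theorem WAXp.mono {S T : Finset (Fin m)} (hST : S ⊆ T) (hS : WAXp κ v S) : WAXp κ v T :=
  fun x hx => hS x fun i hi => hx i (hST hi)

theorem axp_iff_forall_not_waxp_erase {S : Finset (Fin m)} :
    AXp κ v S ↔ WAXp κ v S ∧ ∀ i ∈ S, ¬ WAXp κ v (S.erase i) := by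
  refine and_congr_right fun _ => ⟨fun h i hi => h _ (Finset.erase_ssubset hi), ?_⟩
  intro h T hTS hT
  obtain ⟨i, hiS, hiT⟩ := Finset.exists_of_ssubset hTS
  exact h i hiS (hT.mono (Finset.subset_erase.2 ⟨hTS.subset, hiT⟩))

theorem WAXp.erase_of_forall_ne {S : Finset (Fin m)} {i : Fin m}
    (h : ∀ x, x i ≠ v i → κ x = κ v) (hS : WAXp κ v S) : WAXp κ v (S.erase i) := by
  intro x hx
  by_cases hxi : x i = v i
  · refine hS x fun j hj => ?_
    by_cases hji : j = i
    · exact hji ▸ hxi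
    · exact hx j (Finset.mem_erase.2 ⟨hji, hj⟩)
  · exact h x hxi

theorem not_relevant_of_forall_ne {i : Fin m} (h : ∀ x, x i ≠ v i → κ x = κ v) :
    ¬ Relevant κ v i := by
  rintro ⟨S, ⟨hS, hmin⟩, hi⟩
  exact hmin _ (Finset.erase_ssubset hi) (hS.erase_of_forall_ne h)

end Explanations

theorem stmt14 :
    kappa2 v1000 = false ∧
    ¬ Relevant kappa2 v1000 0 ∧
    Relevant kappa2 v1000 3 ∧
    Sv kappa2 v1000 0 = 1 / 8 ∧
    Sv kappa2 v1000 0 ≠ 0 ∧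
    Sv kappa2 v1000 3 = 0 := by
  have hSv0 : Sv kappa2 v1000 0 = 1 / 8 := by decide +kernel
  have hAXp : AXp kappa2 v1000 {1, 3} := axp_iff_forall_not_waxp_erase.2 (by decide)
  exact ⟨rfl, not_relevant_of_forall_ne (by decide), ⟨{1, 3}, hAXp, by decide⟩, hSv0,
    by norm_num [hSv0], by decide +kernel⟩
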